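/- For k ≥ 1, let w_k : ℝ → ℝ be given by w_k(s) = 0 for s < 0, w_k(s) = s/√k for 0 ≤ s ≤ k, and w_k(s) = √k for s > k, and define u_k : ℝ² → ℝ radially by w_k(s) = √(4π) u_k(e^{-s/2}) with |x|² = e^{-s}. Then ‖∇u_k‖₂ = 1 and ‖u_k‖₂² = (1/2)(1/k − e^{-k} − k^{-1}e^{-k}), so ‖u_k‖₂ → 0 as k → ∞. -/

import Mathlib

/-!
Write `s = -log ‖x‖²`, so `‖x‖ = e^{-s/2}`. For `f(x) = g(s)`, polar coordinates give
`∫_{ℝ²} f = π ∫ g(s) e^{-s} ds`, while `‖∇f(x)‖² = 4 g'(s)² e^{s}`; the exponentials cancel,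
so `∫ ‖∇f‖² = 4π ∫ g'²`. For `g = w_k / √(4π)` this is `∫ (w_k')² = k · (1/√k)² = 1`, and
`‖u_k‖₂²` reduces to the elementary integral `∫_0^k s² e^{-s} ds`.
-/

open MeasureTheory Real Filter Set

theorem integral_fun_norm_euclideanSpace_fin_two (f : ℝ → ℝ) :
    ∫ x : EuclideanSpace ℝ (Fin 2), f ‖x‖ = 2 * π * ∫ r in Ioi (0 : ℝ), r * f r := by
  have hball : volume.real (Metric.ball (0 : EuclideanSpace ℝ (Fin 2)) 1) = π := by
    rw [measureReal_def, EuclideanSpace.volume_ball]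
    norm_num [sq_sqrt pi_pos.le, Gamma_two, pi_pos.le]
  rw [integral_fun_norm_addHaar volume f, finrank_euclideanSpace_fin, hball]
  norm_num [mul_assoc]

theorem integral_Ioi_mul_comp_neg_log_sq (g : ℝ → ℝ) :
    ∫ r in Ioi (0 : ℝ), r * g (-log (r ^ 2)) = (1 / 2) * ∫ s, g s * exp (-s) := by
  have himage : (fun s : ℝ => exp (-s / 2)) '' univ = Ioi 0 := by
    rw [image_univ]
    ext r
    refine ⟨fun ⟨s, hs⟩ => hs ▸ exp_pos _, fun hr => ⟨-2 * log r, ?_⟩⟩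
    simp [exp_log (mem_Ioi.1 hr)]
  have hderiv : ∀ s ∈ (univ : Set ℝ),
      HasDerivWithinAt (fun s : ℝ => exp (-s / 2)) (-(exp (-s / 2) / 2)) univ s := fun s _ =>
    (((hasDerivAt_neg s).div_const 2).exp.congr_deriv (by ring)).hasDerivWithinAt
  have hinj : InjOn (fun s : ℝ => exp (-s / 2)) univ := fun a _ b _ h => by
    simpa using exp_injective h
  rw [← himage, integral_image_eq_integral_abs_deriv_smul MeasurableSet.univ hderiv hinj,
    setIntegral_univ, ← integral_const_mul]
  congr 1 with s
  have hsq : exp (-s / 2) * exp (-s / 2) = exp (-s) := by rw [← exp_add]; ring_nf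
  rw [abs_neg, abs_of_pos (by positivity), smul_eq_mul, ← exp_nat_mul, log_exp, ← hsq]
  push_cast
  ring_nf

theorem integral_eq_pi_mul_integral_mul_exp_neg {f : EuclideanSpace ℝ (Fin 2) → ℝ} {g : ℝ → ℝ}
    (hf : ∀ x ≠ 0, f x = g (-log (‖x‖ ^ 2))) :
    ∫ x, f x = π * ∫ s, g s * exp (-s) := by
  rw [integral_congr_ae ((volume.ae_ne 0).mono hf),
    integral_fun_norm_euclideanSpace_fin_two (fun r => g (-log (r ^ 2))),
    integral_Ioi_mul_comp_neg_log_sq]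
  ring

theorem ae_neg_log_norm_sq_ne {E : Type*} [NormedAddCommGroup E] [NormedSpace ℝ E]
    [FiniteDimensional ℝ E] [Nontrivial E] [MeasurableSpace E] [BorelSpace E]
    (μ : Measure E) [μ.IsAddHaarMeasure] (t : ℝ) : ∀ᵐ x ∂μ, -log (‖x‖ ^ 2) ≠ t := by
  filter_upwards [μ.ae_ne 0,
    measure_eq_zero_iff_ae_notMem.1 (Measure.addHaar_sphere μ 0 (exp (-t / 2)))] with x hx0 hxt
  contrapose! hxt
  rw [mem_sphere_zero_iff_norm, ← hxt, log_pow]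
  conv_lhs => rw [← exp_log (norm_pos_iff.2 hx0)]
  congr 1
  push_cast
  ring

theorem norm_fderiv_of_eq_comp_neg_log_norm_sq {E : Type*} [NormedAddCommGroup E]
    [InnerProductSpace ℝ E] {f : E → ℝ} {g : ℝ → ℝ}
    (hf : ∀ y ≠ 0, f y = g (-log (‖y‖ ^ 2))) {x : E} (hx : x ≠ 0)
    (hg : DifferentiableAt ℝ g (-log (‖x‖ ^ 2))) :
    ‖fderiv ℝ f x‖ = 2 * |deriv g (-log (‖x‖ ^ 2))| / ‖x‖ := by
  have hx2 : ‖x‖ ^ 2 ≠ 0 := by positivity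
  have hlog := ((hasStrictFDerivAt_norm_sq x).hasFDerivAt.log hx2).fun_neg
  have hcomp : HasFDerivAt (fun y => g (-log (‖y‖ ^ 2)))
      (deriv g (-log (‖x‖ ^ 2)) • -((‖x‖ ^ 2)⁻¹ • (2 : ℕ) • innerSL ℝ x)) x :=
    hg.hasDerivAt.comp_hasFDerivAt x hlog
  have hfx : f =ᶠ[nhds x] fun y => g (-log (‖y‖ ^ 2)) := (eventually_ne_nhds hx).mono hf
  rw [(hcomp.congr_of_eventuallyEq hfx).fderiv, norm_smul, norm_neg,
    norm_smul, ← Nat.cast_smul_eq_nsmul ℝ, norm_smul, innerSL_apply_norm]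
  simp only [norm_inv, norm_pow, Real.norm_eq_abs, Nat.cast_ofNat, abs_two, abs_norm]
  field_simp

theorem integral_norm_fderiv_sq_of_eq_comp_neg_log_norm_sq
    {f : EuclideanSpace ℝ (Fin 2) → ℝ} {g : ℝ → ℝ} (S : Finset ℝ)
    (hg : ∀ s ∉ S, DifferentiableAt ℝ g s) (hf : ∀ x ≠ 0, f x = g (-log (‖x‖ ^ 2))) :
    ∫ x, ‖fderiv ℝ f x‖ ^ 2 = 4 * π * ∫ s, deriv g s ^ 2 := by
  have hae : ∀ᵐ x : EuclideanSpace ℝ (Fin 2),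
      ‖fderiv ℝ f x‖ ^ 2 = 4 * deriv g (-log (‖x‖ ^ 2)) ^ 2 * exp (-log (‖x‖ ^ 2)) := by
    filter_upwards [volume.ae_ne 0,
      (eventually_all_finset S).2 fun t _ => ae_neg_log_norm_sq_ne volume t] with x hx0 hxS
    have hx : 0 < ‖x‖ := norm_pos_iff.2 hx0
    rw [norm_fderiv_of_eq_comp_neg_log_norm_sq hf hx0 (hg _ fun h => hxS _ h rfl), div_pow,
      mul_pow, sq_abs, exp_neg, exp_log (by positivity)]
    ring
  rw [integral_congr_ae hae,
    integral_eq_pi_mul_integral_mul_exp_neg (g := fun s => 4 * deriv g s ^ 2 * exp s)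
      fun _ _ => rfl]
  simp_rw [mul_assoc, ← exp_add, add_neg_cancel, exp_zero, mul_one, integral_const_mul]
  ring

theorem integral_sq_mul_exp_neg (a : ℝ) :
    ∫ s in (0 : ℝ)..a, s ^ 2 * exp (-s) = 2 - (a ^ 2 + 2 * a + 2) * exp (-a) := by
  have hderiv : ∀ s ∈ uIcc (0 : ℝ) a,
      HasDerivAt (fun s => -(s ^ 2 + 2 * s + 2) * exp (-s)) (s ^ 2 * exp (-s)) s := fun s _ =>
    ((((hasDerivAt_pow 2 s).fun_add ((hasDerivAt_id s).const_mul 2)).add_const 2).fun_neg.fun_mul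
      (hasDerivAt_neg s).exp).congr_deriv (by simp only [id]; ring)
  rw [intervalIntegral.integral_eq_sub_of_hasDerivAt hderiv
    (Continuous.intervalIntegrable (by fun_prop) _ _)]
  simp only [zero_pow two_ne_zero, mul_zero, add_zero, zero_add, neg_zero, exp_zero, mul_one]
  ring

noncomputable def moserProfile (k s : ℝ) : ℝ :=
  if s < 0 then 0 else if s ≤ k then s / √k else √k

theorem hasDerivAt_moserProfile {k s : ℝ} (hk : 0 ≤ k) (hs0 : s ≠ 0) (hsk : s ≠ k) :
    HasDerivAt (moserProfile k) ((Ioo 0 k).indicator (fun _ => (√k)⁻¹) s) s := by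
  rcases hs0.lt_or_gt with hs | hs
  · have hloc : moserProfile k =ᶠ[nhds s] fun _ => 0 :=
      eventually_of_mem (Iio_mem_nhds hs) fun y hy => if_pos hy
    rw [indicator_of_notMem fun h => (h.1.trans hs).false]
    exact (hasDerivAt_const s 0).congr_of_eventuallyEq hloc
  rcases hsk.lt_or_gt with hsk | hsk
  · have hloc : moserProfile k =ᶠ[nhds s] fun y => y / √k :=
      eventually_of_mem (Ioo_mem_nhds hs hsk) fun y hy => by
        simp [moserProfile, not_lt.2 hy.1.le, hy.2.le]
    rw [indicator_of_mem (show s ∈ Ioo 0 k from ⟨hs, hsk⟩)]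
    exact ((hasDerivAt_id s).div_const √k).congr_of_eventuallyEq hloc |>.congr_deriv (one_div _)
  · have hloc : moserProfile k =ᶠ[nhds s] fun _ => √k :=
      eventually_of_mem (Ioi_mem_nhds hsk) fun y hy => by
        simp [moserProfile, not_lt.2 (hk.trans hy.le), not_le.2 (mem_Ioi.1 hy)]
    rw [indicator_of_notMem fun h => (h.2.trans hsk).false]
    exact (hasDerivAt_const s √k).congr_of_eventuallyEq hloc

theorem integral_deriv_moserProfile_sq {k : ℝ} (hk : 0 < k) :
    ∫ s, deriv (moserProfile k) s ^ 2 = 1 := by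
  have hae : (fun s => deriv (moserProfile k) s ^ 2) =ᵐ[volume]
      (Ioo 0 k).indicator fun _ => k⁻¹ := by
    filter_upwards [volume.ae_ne 0, volume.ae_ne k] with s hs0 hsk
    rw [(hasDerivAt_moserProfile hk.le hs0 hsk).deriv]
    by_cases hs : s ∈ Ioo 0 k
    · simp [indicator_of_mem hs, inv_pow, sq_sqrt hk.le]
    · simp [indicator_of_notMem hs]
  rw [integral_congr_ae hae, integral_indicator_const _ measurableSet_Ioo,
    volume_real_Ioo_of_le hk.le, sub_zero, smul_eq_mul, mul_inv_cancel₀ hk.ne']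

theorem integral_moserProfile_sq_mul_exp_neg {k : ℝ} (hk : 0 < k) :
    ∫ s, moserProfile k s ^ 2 * exp (-s) = 2 * (1 / k - exp (-k) - exp (-k) / k) := by
  have hvanish : ∀ s ∉ Ioi (0 : ℝ), moserProfile k s ^ 2 * exp (-s) = 0 := by
    intro s hs
    rcases (not_lt.1 (mt mem_Ioi.2 hs)).lt_or_eq with hs | rfl
    · simp [moserProfile, hs]
    · simp [moserProfile, hk.le]
  have hlow : EqOn (fun s => moserProfile k s ^ 2 * exp (-s))
      (fun s => k⁻¹ * (s ^ 2 * exp (-s))) (Ioc 0 k) := by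
    intro s hs
    simp only [moserProfile, not_lt.2 hs.1.le, ↓reduceIte, hs.2, div_pow, sq_sqrt hk.le]
    ring
  have hhigh : EqOn (fun s => moserProfile k s ^ 2 * exp (-s)) (fun s => k * exp (-s))
      (Ioi k) := by
    intro s hs
    simp [moserProfile, not_lt.2 (hk.trans hs).le, not_le.2 (mem_Ioi.1 hs), sq_sqrt hk.le]
  have hint_low : IntegrableOn (fun s => k⁻¹ * (s ^ 2 * exp (-s))) (Ioc 0 k) :=
    (Continuous.integrableOn_Icc (by fun_prop)).mono_set Ioc_subset_Icc_self
  have hint_high : IntegrableOn (fun s => k * exp (-s)) (Ioi k) :=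
    (integrableOn_exp_neg_Ioi k).const_mul k
  rw [← setIntegral_eq_integral_of_forall_compl_eq_zero hvanish, ← Ioc_union_Ioi_eq_Ioi hk.le,
    setIntegral_union Ioc_disjoint_Ioi_same measurableSet_Ioi
      (hint_low.congr_fun hlow.symm measurableSet_Ioc)
      (hint_high.congr_fun hhigh.symm measurableSet_Ioi),
    setIntegral_congr_fun measurableSet_Ioc hlow, setIntegral_congr_fun measurableSet_Ioi hhigh,
    integral_const_mul, integral_const_mul, ← intervalIntegral.integral_of_le hk.le,
    integral_sq_mul_exp_neg, integral_exp_neg_Ioi]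
  field_simp
  ring

section MoserFunction

variable {k : ℝ} {v : EuclideanSpace ℝ (Fin 2) → ℝ}

theorem integral_sq_of_eq_moserProfile (hk : 0 < k)
    (hv : ∀ x ≠ 0, v x = moserProfile k (-log (‖x‖ ^ 2)) / √(4 * π)) :
    ∫ x, v x ^ 2 = (1 / 2) * (1 / k - exp (-k) - exp (-k) / k) := by
  rw [integral_eq_pi_mul_integral_mul_exp_neg (g := fun s => (moserProfile k s / √(4 * π)) ^ 2)
    fun x hx => by rw [hv x hx]]
  simp_rw [div_pow, sq_sqrt (by positivity : (0 : ℝ) ≤ 4 * π), div_mul_eq_mul_div, integral_div,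
    integral_moserProfile_sq_mul_exp_neg hk]
  field_simp
  ring

theorem integral_norm_fderiv_sq_of_eq_moserProfile (hk : 0 < k)
    (hv : ∀ x ≠ 0, v x = moserProfile k (-log (‖x‖ ^ 2)) / √(4 * π)) :
    ∫ x, ‖fderiv ℝ v x‖ ^ 2 = 1 := by
  have hdiff : ∀ s ∉ ({0, k} : Finset ℝ),
      DifferentiableAt ℝ (fun s => moserProfile k s / √(4 * π)) s := fun s hs => by
    simp only [Finset.mem_insert, Finset.mem_singleton, not_or] at hs
    exact (hasDerivAt_moserProfile hk.le hs.1 hs.2).differentiableAt.div_const _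
  rw [integral_norm_fderiv_sq_of_eq_comp_neg_log_norm_sq _ hdiff hv]
  simp_rw [deriv_div_const, div_pow, sq_sqrt (by positivity : (0 : ℝ) ≤ 4 * π), integral_div,
    integral_deriv_moserProfile_sq hk]
  field_simp

end MoserFunction

/-- The truncated-linear Moser profiles `w_k` give radial functions `u_k` on `ℝ²`
(via `w_k(s) = √(4π) u_k(e^{-s/2})`, `|x|² = e^{-s}`) with `‖∇u_k‖₂ = 1` and
`‖u_k‖₂² = (1/2)(1/k − e^{-k} − k⁻¹e^{-k}) → 0`. -/
theorem moser_profile_norms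
    (w : ℕ → ℝ → ℝ)
    (hw : ∀ k : ℕ, 1 ≤ k → ∀ s : ℝ,
      w k s = if s < 0 then 0
        else if s ≤ (k : ℝ) then s / Real.sqrt (k : ℝ)
        else Real.sqrt (k : ℝ))
    (u : ℕ → EuclideanSpace ℝ (Fin 2) → ℝ)
    (hu : ∀ k : ℕ, ∀ x : EuclideanSpace ℝ (Fin 2), x ≠ 0 →
      u k x = w k (-Real.log (‖x‖ ^ 2)) / Real.sqrt (4 * π)) :
    (∀ k : ℕ, 1 ≤ k →
      Real.sqrt (∫ x : EuclideanSpace ℝ (Fin 2), ‖fderiv ℝ (u k) x‖ ^ 2 ∂volume) = 1) ∧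
    (∀ k : ℕ, 1 ≤ k →
      ∫ x : EuclideanSpace ℝ (Fin 2), (u k x) ^ 2 ∂volume =
        (1 / 2) * (1 / (k : ℝ) - Real.exp (-(k : ℝ)) - Real.exp (-(k : ℝ)) / (k : ℝ))) ∧
    Tendsto (fun k : ℕ =>
      Real.sqrt (∫ x : EuclideanSpace ℝ (Fin 2), (u k x) ^ 2 ∂volume)) atTop (nhds 0) := by
  have hv : ∀ k : ℕ, 1 ≤ k → ∀ x ≠ 0,
      u k x = moserProfile k (-log (‖x‖ ^ 2)) / √(4 * π) := fun k hk x hx => by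
    rw [hu k x hx, hw k hk, moserProfile]
  have hk0 : ∀ k : ℕ, 1 ≤ k → (0 : ℝ) < k := fun k hk => by exact_mod_cast hk
  refine ⟨fun k hk => ?_, fun k hk => integral_sq_of_eq_moserProfile (hk0 k hk) (hv k hk), ?_⟩
  · rw [integral_norm_fderiv_sq_of_eq_moserProfile (hk0 k hk) (hv k hk), sqrt_one]
  have hinv : Tendsto (fun k : ℕ => 1 / (k : ℝ)) atTop (nhds 0) :=
    tendsto_one_div_atTop_nhds_zero_nat
  have hexp : Tendsto (fun k : ℕ => exp (-(k : ℝ))) atTop (nhds 0) :=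
    tendsto_exp_neg_atTop_nhds_zero.comp tendsto_natCast_atTop_atTop
  have hlim := (((hinv.sub hexp).sub (hexp.mul hinv)).const_mul (1 / 2 : ℝ)).sqrt
  simp only [mul_zero, sub_zero, sqrt_zero] at hlim
  refine hlim.congr' ((eventually_ge_atTop 1).mono fun k hk => ?_)
  simp only [integral_sq_of_eq_moserProfile (hk0 k hk) (hv k hk), mul_one_div]
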